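/- For α, β ≥ 0, the value 2∫_{−∞}^0 Φ(αt − β) φ(t) dt equals Φ(−β/√(1+α²)) − 2T(−β/√(1+α²), α), where T is Owen's T function; equivalently it equals Φ_SN(−β/√(α²+1); α). -/

import Mathlib

open Real MeasureTheory

/-- Standard normal PDF. -/
noncomputable def stdPdf (x : ℝ) : ℝ := Real.exp (-x ^ 2 / 2) / Real.sqrt (2 * Real.pi)

/-- Gaussian tail function Q. -/
noncomputable def gaussQ (x : ℝ) : ℝ := ∫ s in Set.Ioi x, stdPdf s

/-- Standard normal CDF. -/
noncomputable def stdCdf (x : ℝ) : ℝ := ∫ s in Set.Iic x, stdPdf s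

/-- Owen's T function. -/
noncomputable def owenT (h a : ℝ) : ℝ :=
  ∫ x in (0 : ℝ)..a, Real.exp (-h ^ 2 * (1 + x ^ 2) / 2) / (1 + x ^ 2) / (2 * Real.pi)

/-- Skew-normal PDF with shape `lam`. -/
noncomputable def phiSN (x lam : ℝ) : ℝ := 2 * stdPdf x * gaussQ (-(lam * x))

/-- Skew-normal CDF with shape `lam`. -/
noncomputable def PhiSN (x lam : ℝ) : ℝ := stdCdf x - 2 * owenT x lam

open Set Filter Topology

lemma stdPdf_eq (x : ℝ) : stdPdf x = (Real.sqrt (2 * Real.pi))⁻¹ * Real.exp (-(1/2) * x ^ 2) := by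
  rw [stdPdf]; ring_nf

lemma continuous_stdPdf : Continuous stdPdf := by
  unfold stdPdf; fun_prop

lemma stdPdf_pos (x : ℝ) : 0 < stdPdf x := by
  apply div_pos (exp_pos _) (Real.sqrt_pos.2 (by positivity))

lemma integrable_stdPdf : Integrable stdPdf := by
  have : Integrable (fun x : ℝ => Real.exp (-(1/2) * x ^ 2)) := integrable_exp_neg_mul_sq (by norm_num)
  simpa only [← stdPdf_eq] using this.const_mul (Real.sqrt (2 * Real.pi))⁻¹

lemma integral_stdPdf : ∫ x, stdPdf x = 1 := by
  simp only [stdPdf_eq]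
  rw [integral_const_mul, integral_gaussian]
  rw [← Real.sqrt_inv, ← Real.sqrt_mul (by positivity)]
  rw [show ((2*Real.pi)⁻¹ * (Real.pi / (1/2))) = 1 by field_simp]
  exact Real.sqrt_one

lemma stdPdf_neg (x : ℝ) : stdPdf (-x) = stdPdf x := by simp [stdPdf]

lemma stdCdf_zero : stdCdf 0 = 1/2 := by
  have h1 : stdCdf 0 + ∫ x in Set.Ioi (0:ℝ), stdPdf x = 1 := by
    rw [stdCdf, intervalIntegral.integral_Iic_add_Ioi integrable_stdPdf.integrableOn integrable_stdPdf.integrableOn,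
      integral_stdPdf]
  have h2 : stdCdf 0 = ∫ x in Set.Ioi (0:ℝ), stdPdf x := by
    rw [stdCdf]
    rw [show (0:ℝ) = -0 by norm_num, ← integral_comp_neg_Iic]
    simp [stdPdf_neg]
  linarith

lemma stdCdf_eq_add (x : ℝ) : stdCdf x = 1/2 + ∫ s in (0:ℝ)..x, stdPdf s := by
  rw [← stdCdf_zero, ← intervalIntegral.integral_Iic_sub_Iic integrable_stdPdf.integrableOn integrable_stdPdf.integrableOn]
  rw [stdCdf, stdCdf]; ring

lemma hasDerivAt_stdCdf (x : ℝ) : HasDerivAt stdCdf (stdPdf x) x := by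
  have := (continuous_stdPdf.integral_hasStrictDerivAt 0 x).hasDerivAt
  have h2 : stdCdf = fun u => 1/2 + ∫ s in (0:ℝ)..u, stdPdf s := funext stdCdf_eq_add
  rw [h2]
  simpa using (this.const_add (1/2 : ℝ))

lemma stdCdf_le_one (x : ℝ) : stdCdf x ≤ 1 := by
  rw [← integral_stdPdf, stdCdf]
  exact setIntegral_le_integral integrable_stdPdf (by filter_upwards with a using (stdPdf_pos a).le)

lemma stdCdf_nonneg (x : ℝ) : 0 ≤ stdCdf x :=
  setIntegral_nonneg measurableSet_Iic (fun a _ => (stdPdf_pos a).le)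

lemma integral_comp_affine_Iic (f : ℝ → ℝ) {c : ℝ} (d a : ℝ) (hc : 0 < c) :
    ∫ t in Iic a, f (c * t + d) = c⁻¹ * ∫ u in Iic (c * a + d), f u := by
  have h1 : ∀ t : ℝ, (Iic a).indicator (fun t => f (c * t + d)) t
      = (Iic (c * a + d)).indicator f (c * t + d) := by
    intro t
    by_cases ht : t ≤ a
    · rw [Set.indicator_of_mem (show t ∈ Iic a from ht),
        Set.indicator_of_mem (show c * t + d ∈ Iic (c * a + d) from
          add_le_add_left (mul_le_mul_of_nonneg_left ht hc.le) d)]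
    · rw [Set.indicator_of_notMem (show t ∉ Iic a from ht),
        Set.indicator_of_notMem (show c * t + d ∉ Iic (c * a + d) from ?_)]
      intro h
      exact ht (le_of_mul_le_mul_left (by linarith [h.out]) hc)
  rw [← integral_indicator measurableSet_Iic, ← integral_indicator measurableSet_Iic]
  calc ∫ t, (Iic a).indicator (fun t => f (c * t + d)) t
      = ∫ t, (Iic (c * a + d)).indicator f (c * t + d) := by simp_rw [h1]
    _ = |c⁻¹| • ∫ y, (Iic (c * a + d)).indicator f (y + d) :=
        MeasureTheory.Measure.integral_comp_mul_left (fun y => (Iic (c * a + d)).indicator f (y + d)) c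
    _ = c⁻¹ * ∫ u, (Iic (c * a + d)).indicator f u := by
        rw [integral_add_right_eq_self, abs_of_pos (inv_pos.2 hc), smul_eq_mul]

lemma integral_stdPdf_affine_Iic {c : ℝ} (d a : ℝ) (hc : 0 < c) :
    ∫ t in Iic a, stdPdf (c * t + d) = c⁻¹ * stdCdf (c * a + d) :=
  integral_comp_affine_Iic stdPdf d a hc

lemma stdPdf_mul (x y : ℝ) :
    stdPdf x * stdPdf y = Real.exp (-(x ^ 2 + y ^ 2) / 2) / (2 * Real.pi) := by
  rw [stdPdf, stdPdf, div_mul_div_comm, ← Real.exp_add,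
    Real.mul_self_sqrt (by positivity)]
  ring_nf

lemma sq_sqrt_one_add_sq (α : ℝ) : (Real.sqrt (1 + α ^ 2)) ^ 2 = 1 + α ^ 2 :=
  Real.sq_sqrt (by positivity)

lemma sqrt_one_add_sq_pos (α : ℝ) : 0 < Real.sqrt (1 + α ^ 2) :=
  Real.sqrt_pos.2 (by positivity)

lemma gauss_product (α β t : ℝ) :
    stdPdf (α * t - β) * stdPdf t =
      stdPdf (β / Real.sqrt (1 + α ^ 2)) *
        stdPdf (Real.sqrt (1 + α ^ 2) * t + -(α * β / Real.sqrt (1 + α ^ 2))) := by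
  set s := Real.sqrt (1 + α ^ 2) with hs
  have hs0 : s ≠ 0 := (sqrt_one_add_sq_pos α).ne'
  have hs2 : s ^ 2 = 1 + α ^ 2 := sq_sqrt_one_add_sq α
  rw [stdPdf_mul, stdPdf_mul]
  congr 1
  congr 1
  field_simp
  ring_nf
  linear_combination (t^2*s^2 - β^2) * hs2

lemma conv_gauss (α β : ℝ) :
    ∫ t in Iic (0:ℝ), stdPdf (α * t - β) * stdPdf t =
      (Real.sqrt (1 + α ^ 2))⁻¹ * stdPdf (β / Real.sqrt (1 + α ^ 2)) *
        stdCdf (-(α * β / Real.sqrt (1 + α ^ 2))) := by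
  set s := Real.sqrt (1 + α ^ 2) with hs
  simp_rw [gauss_product α β]
  rw [integral_const_mul, integral_stdPdf_affine_Iic _ _ (sqrt_one_add_sq_pos α)]
  ring_nf
  rw [hs]

lemma stdPdf_le (x : ℝ) : stdPdf x ≤ (Real.sqrt (2 * Real.pi))⁻¹ := by
  rw [stdPdf, div_eq_mul_inv]
  have h1 : Real.exp (-x ^ 2 / 2) ≤ 1 := by
    rw [Real.exp_le_one_iff]
    nlinarith [sq_nonneg x]
  calc Real.exp (-x ^ 2 / 2) * (Real.sqrt (2 * Real.pi))⁻¹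
      ≤ 1 * (Real.sqrt (2 * Real.pi))⁻¹ := by
        exact mul_le_mul_of_nonneg_right h1 (by positivity)
    _ = (Real.sqrt (2 * Real.pi))⁻¹ := one_mul _

lemma continuous_stdCdf : Continuous stdCdf := by
  have : Differentiable ℝ stdCdf := fun x => (hasDerivAt_stdCdf x).differentiableAt
  exact this.continuous

lemma hasDerivAt_L (α β : ℝ) :
    HasDerivAt (fun b => ∫ t in Iic (0:ℝ), stdCdf (α * t - b) * stdPdf t)
      (-∫ t in Iic (0:ℝ), stdPdf (α * t - β) * stdPdf t) β := by
  set μ := volume.restrict (Iic (0:ℝ))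
  have key := hasDerivAt_integral_of_dominated_loc_of_deriv_le (μ := μ)
    (F := fun b t => stdCdf (α * t - b) * stdPdf t)
    (F' := fun b t => -(stdPdf (α * t - b) * stdPdf t))
    (x₀ := β) (bound := fun t => (Real.sqrt (2 * Real.pi))⁻¹ * stdPdf t)
    (Metric.ball_mem_nhds _ one_pos) ?_ ?_ ?_ ?_ ?_ ?_
  · have h2 : (∫ t, -(stdPdf (α * t - β) * stdPdf t) ∂μ)
        = -∫ t in Iic (0:ℝ), stdPdf (α * t - β) * stdPdf t := by
      rw [integral_neg]
    rw [← h2]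
    exact key.2
  · filter_upwards with b
    exact ((continuous_stdCdf.comp (by fun_prop)).mul continuous_stdPdf).aestronglyMeasurable
  · apply Integrable.mono' (integrable_stdPdf.restrict.const_mul 1)
      ((continuous_stdCdf.comp (by fun_prop)).mul continuous_stdPdf).aestronglyMeasurable
    filter_upwards with t
    simp only [Pi.mul_apply, Function.comp_apply, norm_mul, Real.norm_eq_abs, abs_of_nonneg (stdCdf_nonneg _),
      abs_of_nonneg (stdPdf_pos _).le, one_mul]
    exact mul_le_of_le_one_left (stdPdf_pos _).le (stdCdf_le_one _)
  · exact (((continuous_stdPdf.comp (by fun_prop)).mul continuous_stdPdf).neg).aestronglyMeasurable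
  · filter_upwards with t b _
    rw [norm_neg, norm_mul, Real.norm_eq_abs, Real.norm_eq_abs,
      abs_of_nonneg (stdPdf_pos _).le, abs_of_nonneg (stdPdf_pos _).le]
    exact mul_le_mul_of_nonneg_right (stdPdf_le _) (stdPdf_pos _).le
  · exact (integrable_stdPdf.restrict.const_mul _)
  · filter_upwards with t b _
    have h1 : HasDerivAt (fun b : ℝ => α * t - b) (-1) b := by
      simpa using ((hasDerivAt_id b).const_sub (α * t)).neg.neg
    have h2 := ((hasDerivAt_stdCdf (α * t - b)).comp b h1).mul_const (stdPdf t)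
    simpa [mul_comm, neg_mul] using h2

lemma hasDerivAt_owenT_aux (a h : ℝ) :
    HasDerivAt (fun h => owenT h a)
      (∫ x in (0:ℝ)..a, -h * Real.exp (-h ^ 2 * (1 + x ^ 2) / 2) / (2 * Real.pi)) h := by
  have key := intervalIntegral.hasDerivAt_integral_of_dominated_loc_of_deriv_le
    (μ := volume) (a := (0:ℝ)) (b := a)
    (F := fun b x => Real.exp (-b ^ 2 * (1 + x ^ 2) / 2) / (1 + x ^ 2) / (2 * Real.pi))
    (F' := fun b x => -b * Real.exp (-b ^ 2 * (1 + x ^ 2) / 2) / (2 * Real.pi))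
    (x₀ := h) (bound := fun _ => (|h| + 1) / (2 * Real.pi))
    (Metric.ball_mem_nhds _ one_pos) ?_ ?_ ?_ ?_ ?_ ?_
  · exact key.2
  · filter_upwards with b
    apply Continuous.aestronglyMeasurable
    have h1 : ∀ x : ℝ, (0:ℝ) < 1 + x ^ 2 := fun x => by positivity
    fun_prop (disch := intros; positivity)
  · apply Continuous.intervalIntegrable
    fun_prop (disch := intros; positivity)
  · apply Continuous.aestronglyMeasurable
    fun_prop
  · filter_upwards with x _ b hb
    rw [Real.norm_eq_abs, abs_div, abs_of_pos (show (0:ℝ) < 2 * Real.pi by positivity),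
      abs_mul, abs_neg]
    apply div_le_div_of_nonneg_right _ (by positivity)
    have h1 : Real.exp (-b ^ 2 * (1 + x ^ 2) / 2) ≤ 1 := by
      rw [Real.exp_le_one_iff]
      have : (0:ℝ) ≤ b ^ 2 * (1 + x ^ 2) := by positivity
      linarith
    have h2 : |b| ≤ |h| + 1 := by
      have := mem_ball_iff_norm.1 hb
      rw [Real.norm_eq_abs] at this
      calc |b| = |h + (b - h)| := by ring_nf
        _ ≤ |h| + |b - h| := abs_add_le _ _
        _ ≤ |h| + 1 := by have h4 := abs_sub_comm b h ▸ this; linarith [abs_sub_comm h b ▸ this]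
    rw [Real.abs_exp]
    calc |b| * Real.exp (-b ^ 2 * (1 + x ^ 2) / 2) ≤ |b| * 1 :=
        mul_le_mul_of_nonneg_left h1 (abs_nonneg _)
      _ ≤ |h| + 1 := by rw [mul_one]; exact h2
  · apply Continuous.intervalIntegrable; fun_prop
  · filter_upwards with x _ b _
    have h1 : HasDerivAt (fun b : ℝ => -b ^ 2 * (1 + x ^ 2) / 2) (-b * (1 + x ^ 2)) b := by
      have := ((hasDerivAt_pow 2 b).neg.mul_const (1 + x ^ 2)).div_const 2
      refine this.congr_deriv ?_
      ring
    have h2 := ((Real.hasDerivAt_exp _).comp b h1).div_const (1 + x ^ 2)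
    have h3 := h2.div_const (2 * Real.pi)
    refine h3.congr_deriv ?_
    have hx : (1 + x ^ 2) ≠ 0 := by positivity
    field_simp

lemma exp_eq_stdPdf (h x : ℝ) :
    Real.exp (-h ^ 2 * (1 + x ^ 2) / 2) =
      Real.sqrt (2 * Real.pi) * Real.sqrt (2 * Real.pi) * (stdPdf h * stdPdf (h * x)) := by
  rw [stdPdf, stdPdf, div_mul_div_comm, ← Real.exp_add]
  rw [mul_div_assoc]
  rw [mul_div_cancel₀ _ (by positivity : Real.sqrt (2 * Real.pi) * Real.sqrt (2 * Real.pi) ≠ 0)]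
  congr 1
  ring

lemma owenT_deriv_eval (a h : ℝ) :
    (∫ x in (0:ℝ)..a, -h * Real.exp (-h ^ 2 * (1 + x ^ 2) / 2) / (2 * Real.pi)) =
      -(stdPdf h * (stdCdf (h * a) - 1/2)) := by
  have h2pi : Real.sqrt (2 * Real.pi) * Real.sqrt (2 * Real.pi) = 2 * Real.pi :=
    Real.mul_self_sqrt (by positivity)
  by_cases hh : h = 0
  · simp [hh, stdCdf_zero]
  · simp_rw [exp_eq_stdPdf h]
    have key : ∀ x : ℝ, -h * (Real.sqrt (2 * Real.pi) * Real.sqrt (2 * Real.pi) *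
        (stdPdf h * stdPdf (h * x))) / (2 * Real.pi) = (-h * stdPdf h) * stdPdf (h * x) := by
      intro x
      rw [show -h * (Real.sqrt (2 * Real.pi) * Real.sqrt (2 * Real.pi) *
        (stdPdf h * stdPdf (h * x))) = (Real.sqrt (2 * Real.pi) * Real.sqrt (2 * Real.pi)) *
        (-h * stdPdf h * stdPdf (h * x)) by ring, h2pi]
      field_simp
    simp_rw [key]
    rw [intervalIntegral.integral_const_mul]
    rw [intervalIntegral.integral_comp_mul_left (fun u => stdPdf u) hh]
    rw [mul_zero, smul_eq_mul]
    have : (∫ u in (0:ℝ)..h * a, stdPdf u) = stdCdf (h * a) - 1/2 := by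
      rw [stdCdf_eq_add]; ring
    rw [this]
    field_simp

lemma hasDerivAt_owenT_left (a h : ℝ) :
    HasDerivAt (fun h => owenT h a) (-(stdPdf h * (stdCdf (h * a) - 1/2))) h := by
  have := hasDerivAt_owenT_aux a h
  rwa [owenT_deriv_eval] at this

lemma integrable_mul_stdPdf : Integrable (fun t : ℝ => t * stdPdf t) := by
  have h1 : Integrable (fun t : ℝ => t * Real.exp (-(1/2) * t ^ 2)) :=
    integrable_mul_exp_neg_mul_sq (by norm_num)
  have he : (fun t : ℝ => t * stdPdf t)
      = fun t => (Real.sqrt (2 * Real.pi))⁻¹ * (t * Real.exp (-(1/2) * t ^ 2)) := by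
    funext t; rw [stdPdf_eq]; ring
  rw [he]
  exact h1.const_mul _

lemma integrable_abs_mul_stdPdf : Integrable (fun t : ℝ => |t| * stdPdf t) := by
  apply integrable_mul_stdPdf.abs.congr
  filter_upwards with t
  rw [abs_mul, abs_of_nonneg (stdPdf_pos t).le]

lemma hasDerivAt_M (a : ℝ) :
    HasDerivAt (fun a => ∫ t in Iic (0:ℝ), stdCdf (a * t) * stdPdf t)
      (∫ t in Iic (0:ℝ), t * stdPdf (a * t) * stdPdf t) a := by
  set μ := volume.restrict (Iic (0:ℝ))
  have key := hasDerivAt_integral_of_dominated_loc_of_deriv_le (μ := μ)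
    (F := fun a t => stdCdf (a * t) * stdPdf t)
    (F' := fun a t => t * stdPdf (a * t) * stdPdf t)
    (x₀ := a) (bound := fun t => (Real.sqrt (2 * Real.pi))⁻¹ * (|t| * stdPdf t))
    (Metric.ball_mem_nhds _ one_pos) ?_ ?_ ?_ ?_ ?_ ?_
  · exact key.2
  · filter_upwards with b
    exact ((continuous_stdCdf.comp (by fun_prop)).mul continuous_stdPdf).aestronglyMeasurable
  · apply Integrable.mono' (integrable_stdPdf.restrict.const_mul 1)
      ((continuous_stdCdf.comp (by fun_prop)).mul continuous_stdPdf).aestronglyMeasurable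
    filter_upwards with t
    simp only [Pi.mul_apply, Function.comp_apply, norm_mul, Real.norm_eq_abs, abs_of_nonneg (stdCdf_nonneg _),
      abs_of_nonneg (stdPdf_pos _).le, one_mul]
    exact mul_le_of_le_one_left (stdPdf_pos _).le (stdCdf_le_one _)
  · exact (((continuous_id.mul (continuous_stdPdf.comp (by fun_prop))).mul
      continuous_stdPdf)).aestronglyMeasurable
  · filter_upwards with t b _
    rw [norm_mul, norm_mul, Real.norm_eq_abs, Real.norm_eq_abs, Real.norm_eq_abs,
      abs_of_nonneg (stdPdf_pos _).le, abs_of_nonneg (stdPdf_pos _).le,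
      show (Real.sqrt (2 * Real.pi))⁻¹ * (|t| * stdPdf t)
        = |t| * (Real.sqrt (2 * Real.pi))⁻¹ * stdPdf t by ring]
    exact mul_le_mul_of_nonneg_right
      (mul_le_mul_of_nonneg_left (stdPdf_le _) (abs_nonneg _)) (stdPdf_pos _).le
  · exact (integrable_abs_mul_stdPdf.restrict.const_mul _)
  · filter_upwards with t b _
    have h1 : HasDerivAt (fun b : ℝ => b * t) t b := by
      simpa using (hasDerivAt_id b).mul_const t
    have h2 := ((hasDerivAt_stdCdf (b * t)).comp b h1).mul_const (stdPdf t)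
    simpa [mul_comm] using h2

lemma integral_Iic_mul_exp (c : ℝ) (hc : 0 < c) :
    ∫ t in Iic (0:ℝ), t * Real.exp (-c * t ^ 2 / 2) = -c⁻¹ := by
  have hderiv : ∀ x ∈ Iic (0:ℝ), HasDerivAt (fun t => -c⁻¹ * Real.exp (-c * t ^ 2 / 2))
      (x * Real.exp (-c * x ^ 2 / 2)) x := by
    intro x _
    have h1 : HasDerivAt (fun t : ℝ => -c * t ^ 2 / 2) (-c * x) x := by
      have := ((hasDerivAt_pow 2 x).const_mul (-c)).div_const 2
      refine this.congr_deriv ?_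
      ring
    have h2 := ((Real.hasDerivAt_exp _).comp x h1).const_mul (-c⁻¹)
    refine h2.congr_deriv ?_
    field_simp
  have hint : IntegrableOn (fun x : ℝ => x * Real.exp (-c * x ^ 2 / 2)) (Iic 0) := by
    have : Integrable (fun x : ℝ => x * Real.exp (-(c/2) * x ^ 2)) :=
      integrable_mul_exp_neg_mul_sq (by positivity)
    have he : (fun x : ℝ => x * Real.exp (-c * x ^ 2 / 2))
        = fun x => x * Real.exp (-(c/2) * x ^ 2) := by
      funext x; congr 1; ring_nf
    rw [he]
    exact this.integrableOn
  have hlim : Tendsto (fun t => -c⁻¹ * Real.exp (-c * t ^ 2 / 2)) atBot (𝓝 0) := by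
    have h1 : Tendsto (fun t : ℝ => -c * t ^ 2 / 2) atBot atBot := by
      have h2 : Tendsto (fun t : ℝ => t ^ 2) atBot atTop := by
        have := (tendsto_pow_atTop (α := ℝ) (n := 2) (by norm_num : (2:ℕ) ≠ 0)).comp
          (tendsto_neg_atBot_atTop (G := ℝ))
        apply this.congr
        intro t
        simp [Function.comp]
      have h3 := (Filter.tendsto_neg_atTop_atBot (G := ℝ)).comp
        (Filter.Tendsto.const_mul_atTop (by positivity : (0:ℝ) < c/2) h2)
      apply h3.congr
      intro t
      simp only [Function.comp]
      ring
    have := tendsto_exp_atBot.comp h1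
    have h4 := this.const_mul (-c⁻¹)
    simpa using h4
  have := integral_Iic_of_hasDerivAt_of_tendsto' hderiv hint hlim
  rw [this]
  simp

lemma integral_deriv_M (a : ℝ) :
    ∫ t in Iic (0:ℝ), t * stdPdf (a * t) * stdPdf t = -((2 * Real.pi)⁻¹ * (1 + a ^ 2)⁻¹) := by
  have he : (fun t : ℝ => t * stdPdf (a * t) * stdPdf t)
      = fun t => (t * Real.exp (-(1 + a ^ 2) * t ^ 2 / 2)) / (2 * Real.pi) := by
    funext t
    rw [mul_assoc, stdPdf_mul]
    rw [show -((a * t) ^ 2 + t ^ 2) / 2 = -(1 + a ^ 2) * t ^ 2 / 2 by ring]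
    ring
  rw [he, integral_div, integral_Iic_mul_exp _ (by positivity)]
  field_simp

lemma owenT_zero (a : ℝ) : owenT 0 a = Real.arctan a / (2 * Real.pi) := by
  rw [owenT]
  have he : ∀ x : ℝ, Real.exp (-(0:ℝ) ^ 2 * (1 + x ^ 2) / 2) / (1 + x ^ 2) / (2 * Real.pi)
      = (1 / (1 + x ^ 2)) / (2 * Real.pi) := by
    intro x
    norm_num
  simp_rw [he]
  rw [intervalIntegral.integral_div, integral_one_div_one_add_sq, Real.arctan_zero, sub_zero]

lemma stepB (α : ℝ) :
    2 * ∫ t in Iic (0:ℝ), stdCdf (α * t) * stdPdf t = stdCdf 0 - 2 * owenT 0 α := by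
  have hG : ∀ a : ℝ, HasDerivAt (fun a : ℝ =>
      2 * (∫ t in Iic (0:ℝ), stdCdf (a * t) * stdPdf t) + Real.arctan a / Real.pi) 0 a := by
    intro a
    have h1 := (hasDerivAt_M a).const_mul 2
    have h2 := (Real.hasDerivAt_arctan a).div_const Real.pi
    have h3 := h1.add h2
    refine h3.congr_deriv ?_
    rw [integral_deriv_M]
    have h4 : (0:ℝ) < 1 + a ^ 2 := by positivity
    field_simp
    ring
  have hconst := is_const_of_deriv_eq_zero (𝕜 := ℝ)
    (f := fun a : ℝ => 2 * (∫ t in Iic (0:ℝ), stdCdf (a * t) * stdPdf t) + Real.arctan a / Real.pi)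
    (fun x => (hG x).differentiableAt) (fun x => (hG x).deriv) α 0
  have hzero : 2 * (∫ t in Iic (0:ℝ), stdCdf ((0:ℝ) * t) * stdPdf t)
      + Real.arctan 0 / Real.pi = 1/2 := by
    simp only [zero_mul, Real.arctan_zero, zero_div, add_zero]
    rw [integral_const_mul]
    have : (∫ t in Iic (0:ℝ), stdPdf t) = stdCdf 0 := rfl
    rw [this, stdCdf_zero]
    norm_num
  rw [hzero] at hconst
  rw [owenT_zero, stdCdf_zero]
  have hpi : Real.pi ≠ 0 := Real.pi_ne_zero
  field_simp at hconst ⊢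
  linarith

lemma stepA (α β : ℝ) :
    2 * ∫ t in Iic (0:ℝ), stdCdf (α * t - β) * stdPdf t =
      stdCdf (-(β / Real.sqrt (1 + α ^ 2))) - 2 * owenT (-(β / Real.sqrt (1 + α ^ 2))) α := by
  have hs0 : Real.sqrt (1 + α ^ 2) ≠ 0 := (sqrt_one_add_sq_pos α).ne'
  have hf : ∀ b : ℝ, HasDerivAt (fun b : ℝ =>
      2 * (∫ t in Iic (0:ℝ), stdCdf (α * t - b) * stdPdf t)
        - (stdCdf (-(b / Real.sqrt (1 + α ^ 2)))
          - 2 * owenT (-(b / Real.sqrt (1 + α ^ 2))) α)) 0 b := by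
    intro b
    set s := Real.sqrt (1 + α ^ 2) with hs
    have hL := (hasDerivAt_L α b).const_mul 2
    have hinner : HasDerivAt (fun b : ℝ => -(b / s)) (-s⁻¹) b := by
      exact ((hasDerivAt_id b).div_const s).neg.congr_deriv (by simp)
    have hCdf : HasDerivAt (fun b : ℝ => stdCdf (-(b / s)))
        (stdPdf (-(b / s)) * -s⁻¹) b := (hasDerivAt_stdCdf _).comp b hinner
    have hT : HasDerivAt (fun b : ℝ => owenT (-(b / s)) α)
        (-(stdPdf (-(b / s)) * (stdCdf (-(b / s) * α) - 1/2)) * -s⁻¹) b :=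
      (hasDerivAt_owenT_left α _).comp b hinner
    have h := hL.sub (hCdf.sub (hT.const_mul 2))
    refine h.congr_deriv ?_
    rw [conv_gauss]
    rw [show -(b / s) = -(b / s) from rfl]
    rw [stdPdf_neg (b / s)]
    rw [show -(b / s) * α = -(α * b / s) by ring]
    ring
  have hconst := is_const_of_deriv_eq_zero (𝕜 := ℝ)
    (f := fun b : ℝ =>
      2 * (∫ t in Iic (0:ℝ), stdCdf (α * t - b) * stdPdf t)
        - (stdCdf (-(b / Real.sqrt (1 + α ^ 2)))
          - 2 * owenT (-(b / Real.sqrt (1 + α ^ 2))) α))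
    (fun x => (hf x).differentiableAt) (fun x => (hf x).deriv) β 0
  have hzero : 2 * (∫ t in Iic (0:ℝ), stdCdf (α * t - 0) * stdPdf t)
      - (stdCdf (-(0 / Real.sqrt (1 + α ^ 2)))
        - 2 * owenT (-(0 / Real.sqrt (1 + α ^ 2))) α) = 0 := by
    simp only [sub_zero, zero_div, neg_zero]
    rw [stepB α]
    ring
  rw [hzero] at hconst
  linarith

theorem classifier_risk (α β : ℝ) (hα : 0 ≤ α) (hβ : 0 ≤ β) :
    2 * ∫ t in Set.Iic (0 : ℝ), stdCdf (α * t - β) * stdPdf t =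
        stdCdf (-(β / Real.sqrt (1 + α ^ 2))) - 2 * owenT (-(β / Real.sqrt (1 + α ^ 2))) α ∧
    2 * ∫ t in Set.Iic (0 : ℝ), stdCdf (α * t - β) * stdPdf t =
        PhiSN (-(β / Real.sqrt (α ^ 2 + 1))) α := by
  constructor
  · exact stepA α β
  · rw [PhiSN, show α ^ 2 + 1 = 1 + α ^ 2 from add_comm _ _]
    exact stepA α β
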